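/- Let R be a non-integer real number with R > 0, let m be a natural number, and let q > 0 and x > 0 be real. Then the coupled-limit Grünwald–Letnikov expression lim_{N→∞} (q x/N)^{-R} ∑_{k=0}^{N} (-1)^k C(R,k) (x - k·q x/N)^m equals the Riemann–Liouville derivative Γ(m+1)/Γ(m-R+1) · x^{m-R} if and only if q satisfies the characteristic equation q^{-R} ∑_{j=0}^{m} C(m,j) (-q)^j/(R-j) = (π/sin(πR)) · Γ(m+1)/(Γ(R+1) Γ(m-R+1)). -/

import Mathlib

/-!
Expanding `(x - k h)^m` binomially turns the Grünwald–Letnikov sum into a combination of the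
moments `M_j(N) = ∑_{k ≤ N} (-1)^k C(R,k) k^j`. In the basis of falling factorials `k^(i)`
(Stirling numbers of the second kind) these have the closed form
`∑_{k ≤ N} (-1)^k C(R,k) k^(i) = (-1)^N R C(R-1,N) N^(i) / (R - i)`, and Euler's limit formula
gives `N^R (-1)^N C(R-1,N) → 1/Γ(1-R)`, so `N^(R-j) M_j(N) → R / ((R-j) Γ(1-R))`.
With the coupled step `h = q x / N` each `h^j` is matched by `N^(R-j)`, so every binomial term
survives and the limit is `x^(m-R) q^(-R) R/Γ(1-R) ∑_j C(m,j) (-q)^j/(R-j)`. By the reflection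
formula `Γ(1-R) Γ(R+1) = R π / sin (π R)`, equating this with the Riemann–Liouville value is
exactly the characteristic equation.
-/

open Finset Filter Real

noncomputable def genBinom (R : ℝ) (k : ℕ) : ℝ :=
  (∏ i ∈ Finset.range k, (R - i)) / (Nat.factorial k)

open Polynomial Topology
open scoped Nat

theorem X_pow_eq_sum_stirlingSecond_mul_descPochhammer (S : Type*) [CommRing S] (n : ℕ) :
    (X : S[X]) ^ n
      = ∑ i ∈ range (n + 1), (n.stirlingSecond i : S[X]) * descPochhammer S i := by
  induction n with
  | zero => simp
  | succ n ih =>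
    have hX (i : ℕ) :
        descPochhammer S i * X = descPochhammer S (i + 1) + (i : S[X]) * descPochhammer S i := by
      rw [descPochhammer_succ_right]; ring
    have hshift : ∑ i ∈ range (n + 1), (n.stirlingSecond i : S[X]) * (i * descPochhammer S i)
        = ∑ i ∈ range (n + 1),
            ((i + 1) * n.stirlingSecond (i + 1) : S[X]) * descPochhammer S (i + 1) := by
      rw [sum_range_succ', sum_range_succ, Nat.stirlingSecond_eq_zero_of_lt n.lt_succ_self]
      simp [mul_left_comm, mul_assoc]
    rw [pow_succ, ih, sum_mul, sum_range_succ' _ (n + 1), Nat.stirlingSecond_succ_zero,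
      Nat.cast_zero, zero_mul, add_zero, sum_congr rfl fun i _ => by rw [mul_assoc, hX, mul_add],
      sum_add_distrib, hshift, ← sum_add_distrib]
    exact sum_congr rfl fun i _ => by rw [Nat.stirlingSecond_succ_succ]; push_cast; ring

theorem descPochhammer_eval_add_one {S : Type*} [CommRing S] (x : S) (i : ℕ) :
    (x + 1 - i) * (descPochhammer S i).eval (x + 1) = (x + 1) * (descPochhammer S i).eval x := by
  have h := descPochhammer_succ_eval i (x + 1)
  rw [descPochhammer_succ_left] at h
  simp only [eval_mul, eval_X, eval_comp, eval_sub, eval_one, add_sub_cancel_right] at h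
  linear_combination -h

@[simp]
theorem genBinom_zero (R : ℝ) : genBinom R 0 = 1 := by
  simp [genBinom]

theorem genBinom_succ_right_eq (R : ℝ) (k : ℕ) :
    genBinom R (k + 1) * (k + 1) = genBinom R k * (R - k) := by
  unfold genBinom
  rw [prod_range_succ, Nat.factorial_succ]
  push_cast
  field_simp

theorem succ_mul_genBinom_succ (R : ℝ) (k : ℕ) :
    (k + 1) * genBinom R (k + 1) = R * genBinom (R - 1) k := by
  unfold genBinom
  rw [prod_range_succ', Nat.factorial_succ]
  push_cast
  field_simp
  simp only [sub_zero, sub_sub, add_comm (1 : ℝ)]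
  ring

theorem prod_range_natCast_sub_eq_genBinom (S : ℝ) (n : ℕ) :
    ∏ j ∈ range n, ((j : ℝ) - S) = (-1) ^ n * n ! * genBinom S n := by
  have : (n ! : ℝ) ≠ 0 := by positivity
  rw [genBinom, mul_assoc, mul_div_cancel₀ _ this, ← card_range n, ← prod_const, card_range,
    ← prod_mul_distrib]
  exact prod_congr rfl fun j _ => by ring

theorem sub_mul_sum_neg_one_pow_mul_genBinom_mul_descPochhammer_eval (R : ℝ) (i N : ℕ) :
    (R - i) * ∑ k ∈ range (N + 1), (-1) ^ k * genBinom R k * (descPochhammer ℝ i).eval (k : ℝ)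
      = (-1) ^ N * R * genBinom (R - 1) N * (descPochhammer ℝ i).eval (N : ℝ) := by
  induction N with
  | zero => cases i <;> simp
  | succ N ih =>
    have hN : (N : ℝ) + 1 ≠ 0 := by positivity
    apply mul_left_cancel₀ hN
    rw [sum_range_succ, mul_add, mul_add, ih]
    push_cast
    linear_combination (-(-1) ^ N * R * genBinom (R - 1) N) * descPochhammer_eval_add_one (N : ℝ) i
      - (-1) ^ N * (R - i) * (descPochhammer ℝ i).eval ((N : ℝ) + 1) * succ_mul_genBinom_succ R N
      + (-1) ^ N * R * (descPochhammer ℝ i).eval ((N : ℝ) + 1) * genBinom_succ_right_eq (R - 1) N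

theorem sum_neg_one_pow_mul_genBinom_mul_pow {R : ℝ} (hR : ∀ n : ℕ, R ≠ n) (j N : ℕ) :
    ∑ k ∈ range (N + 1), (-1) ^ k * genBinom R k * (k : ℝ) ^ j
      = (-1) ^ N * R * genBinom (R - 1) N *
          ∑ i ∈ range (j + 1), j.stirlingSecond i / (R - i) * (descPochhammer ℝ i).eval (N : ℝ) := by
  have hpow (k : ℕ) : (k : ℝ) ^ j
      = ∑ i ∈ range (j + 1), j.stirlingSecond i * (descPochhammer ℝ i).eval (k : ℝ) := by
    simpa [eval_finsetSum] using
      congrArg (eval (k : ℝ)) (X_pow_eq_sum_stirlingSecond_mul_descPochhammer ℝ j)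
  simp_rw [hpow, mul_sum]
  rw [sum_comm]
  refine sum_congr rfl fun i _ => ?_
  have hRi : R - i ≠ 0 := sub_ne_zero.2 (hR i)
  calc ∑ k ∈ range (N + 1),
        (-1) ^ k * genBinom R k * (j.stirlingSecond i * (descPochhammer ℝ i).eval (k : ℝ))
      = j.stirlingSecond i / (R - i) * ((R - i) * ∑ k ∈ range (N + 1),
          (-1) ^ k * genBinom R k * (descPochhammer ℝ i).eval (k : ℝ)) := by
        rw [mul_sum, mul_sum]
        exact sum_congr rfl fun k _ => by field_simp
    _ = _ := by rw [sub_mul_sum_neg_one_pow_mul_genBinom_mul_descPochhammer_eval]; ring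

theorem tendsto_rpow_mul_neg_one_pow_mul_genBinom_sub_one {R : ℝ} (hR : Gamma (1 - R) ≠ 0) :
    Tendsto (fun n : ℕ => (n : ℝ) ^ R * ((-1) ^ n * genBinom (R - 1) n)) atTop
      (𝓝 (Gamma (1 - R))⁻¹) := by
  have hne (n : ℕ) : (n : ℝ) + (1 - R) ≠ 0 := fun h =>
    hR ((Gamma_eq_zero_iff _).2 ⟨n, by linarith⟩)
  -- `(GammaSeq (1 - R) n)⁻¹ = n ^ (R - 1) * (n + 1 - R) * (-1) ^ n * C(R - 1, n)`
  have key := ((GammaSeq_tendsto_Gamma (1 - R)).inv₀ hR).mul (tendsto_natCast_div_add_atTop (1 - R))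
  rw [mul_one] at key
  refine key.congr' ?_
  filter_upwards [eventually_gt_atTop 0] with n hn
  have hn' : (0 : ℝ) < n := by exact_mod_cast hn
  have hprod : ∏ j ∈ range (n + 1), (1 - R + j)
      = (n + (1 - R)) * ((-1) ^ n * n ! * genBinom (R - 1) n) := by
    rw [prod_range_succ, ← prod_range_natCast_sub_eq_genBinom, mul_comm]
    congr 1
    · ring
    · exact prod_congr rfl fun j _ => by ring
  rw [GammaSeq, hprod, rpow_sub hn', rpow_one]
  field_simp [hne n]

theorem tendsto_descPochhammer_eval_div_pow {i j : ℕ} (hij : i ≤ j) :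
    Tendsto (fun N : ℕ => (descPochhammer ℝ i).eval (N : ℝ) / (N : ℝ) ^ j) atTop
      (𝓝 (if i = j then 1 else 0)) := by
  have hdeg : (descPochhammer ℝ i).degree = i := by
    rw [degree_eq_natDegree (monic_descPochhammer ℝ i).ne_zero, descPochhammer_natDegree]
  simp only [← eval_X_pow (R := ℝ)]
  refine Tendsto.comp (g := fun x : ℝ => (descPochhammer ℝ i).eval x / (X ^ j : ℝ[X]).eval x) ?_
    tendsto_natCast_atTop_atTop
  split_ifs with h
  · subst h
    simpa [(monic_descPochhammer ℝ i).leadingCoeff] using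
      div_tendsto_atTop_leadingCoeff_div_of_degree_eq (descPochhammer ℝ i) (X ^ i)
        (by rw [hdeg, degree_X_pow])
  · exact div_tendsto_atTop_zero_of_degree_lt _ _ (by
      rw [hdeg, degree_X_pow]; exact_mod_cast lt_of_le_of_ne hij h)

theorem tendsto_rpow_mul_sum_neg_one_pow_mul_genBinom_mul_pow {R : ℝ} (hR : ∀ n : ℕ, R ≠ n)
    (j : ℕ) :
    Tendsto (fun N : ℕ => (N : ℝ) ^ (R - j) *
        ∑ k ∈ range (N + 1), (-1) ^ k * genBinom R k * (k : ℝ) ^ j)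
      atTop (𝓝 (R / ((R - j) * Gamma (1 - R)))) := by
  have hΓ : Gamma (1 - R) ≠ 0 := Gamma_ne_zero fun n h => hR (n + 1) (by push_cast; linarith)
  have hpoly : Tendsto (fun N : ℕ => ∑ i ∈ range (j + 1), j.stirlingSecond i / (R - i) *
      ((descPochhammer ℝ i).eval (N : ℝ) / (N : ℝ) ^ j)) atTop (𝓝 (1 / (R - j))) := by
    have := tendsto_finsetSum (range (j + 1)) fun i hi =>
      (tendsto_descPochhammer_eval_div_pow (Nat.lt_succ_iff.1 (mem_range.1 hi))).const_mul
        (j.stirlingSecond i / (R - i) : ℝ)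
    simpa [Nat.stirlingSecond_self] using this
  have := (tendsto_rpow_mul_neg_one_pow_mul_genBinom_sub_one hΓ).mul (hpoly.const_mul R)
  convert this.congr' ?_ using 2
  · field_simp
  filter_upwards [eventually_gt_atTop 0] with N hN
  rw [sum_neg_one_pow_mul_genBinom_mul_pow hR, rpow_sub_natCast (by positivity), mul_sum, mul_sum,
    mul_sum, mul_sum]
  exact sum_congr rfl fun i _ => by ring

noncomputable def grunwaldLetnikov (R : ℝ) (f : ℝ → ℝ) (x h : ℝ) (N : ℕ) : ℝ :=
  h ^ (-R) * ∑ k ∈ range (N + 1), (-1) ^ k * genBinom R k * f (x - k * h)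

theorem tendsto_grunwaldLetnikov_pow {R : ℝ} (hR : ∀ n : ℕ, R ≠ n) (m : ℕ) {c : ℝ} (hc : 0 < c)
    (x : ℝ) :
    Tendsto (fun N : ℕ => grunwaldLetnikov R (· ^ m) x (c / N) N) atTop
      (𝓝 (R / Gamma (1 - R) * c ^ (-R) *
        ∑ j ∈ range (m + 1), m.choose j * x ^ (m - j) * (-c) ^ j / (R - j))) := by
  have := tendsto_finsetSum (range (m + 1)) fun j _ =>
    (tendsto_rpow_mul_sum_neg_one_pow_mul_genBinom_mul_pow hR j).const_mul
      (m.choose j * x ^ (m - j) * (-c) ^ j * c ^ (-R))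
  convert this.congr' ?_ using 2
  · rw [mul_sum]
    exact sum_congr rfl fun j _ => by simp only [div_eq_mul_inv, mul_inv]; ring
  filter_upwards [eventually_gt_atTop 0] with N hN
  have hN : (0 : ℝ) < N := by exact_mod_cast hN
  have hexp (k : ℕ) : (x - k * (c / N)) ^ m
      = ∑ j ∈ range (m + 1), m.choose j * x ^ (m - j) * (-(c / N)) ^ j * (k : ℝ) ^ j := by
    rw [sub_eq_neg_add, add_pow]
    exact sum_congr rfl fun j _ => by ring
  have hscale (j : ℕ) : (c / N) ^ (-R) * (-(c / N)) ^ j = (-c) ^ j * c ^ (-R) * N ^ (R - j) := by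
    rw [div_rpow hc.le hN.le, rpow_neg hN.le, rpow_sub_natCast hN.ne', ← neg_div, div_pow]
    field_simp
  simp only [grunwaldLetnikov, hexp, mul_sum]
  rw [sum_comm]
  refine sum_congr rfl fun k _ => sum_congr rfl fun j _ => ?_
  linear_combination
    (-(m.choose j * x ^ (m - j) * ((-1) ^ k * genBinom R k * (k : ℝ) ^ j))) * hscale j

theorem Gamma_ne_zero_of_forall_ne_intCast {s : ℝ} (hs : ∀ n : ℤ, s ≠ n) : Gamma s ≠ 0 :=
  Gamma_ne_zero fun n h => hs (-n) (by simpa using h)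

theorem Gamma_one_sub_div_mul_Gamma_add_one {R : ℝ} (hR : R ≠ 0) :
    Gamma (1 - R) / R * Gamma (R + 1) = π / sin (π * R) := by
  rw [Gamma_add_one hR, ← Gamma_mul_Gamma_one_sub]
  field_simp

theorem coupled_GL_power_eq_RL_iff_general (R : ℝ) (hR : ∀ n : ℤ, R ≠ (n : ℝ))
    (m : ℕ) (q x : ℝ) (hq : 0 < q) (hx : 0 < x) :
    Filter.Tendsto
      (fun N : ℕ =>
        (q * x / N) ^ (-R) *
          ∑ k ∈ Finset.range (N + 1),
            (-1 : ℝ) ^ k * genBinom R k * (x - k * (q * x / N)) ^ m)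
      Filter.atTop
      (nhds (Real.Gamma ((m : ℝ) + 1) / Real.Gamma ((m : ℝ) - R + 1) * x ^ ((m : ℝ) - R)))
      ↔ q ^ (-R) * ∑ j ∈ Finset.range (m + 1), (m.choose j : ℝ) * (-q) ^ j / (R - j)
          = Real.pi / Real.sin (Real.pi * R)
            * (Real.Gamma ((m : ℝ) + 1) / (Real.Gamma (R + 1) * Real.Gamma ((m : ℝ) - R + 1))) := by
  set S := ∑ j ∈ range (m + 1), (m.choose j : ℝ) * (-q) ^ j / (R - j)
  have hΓ₁ : Gamma (1 - R) ≠ 0 :=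
    Gamma_ne_zero_of_forall_ne_intCast fun n h => hR (1 - n) (by push_cast; linarith)
  have hΓ₂ : Gamma (R + 1) ≠ 0 :=
    Gamma_ne_zero_of_forall_ne_intCast fun n h => hR (n - 1) (by push_cast; linarith)
  have hR0 : R ≠ 0 := by exact_mod_cast hR 0
  have hsum : ∑ j ∈ range (m + 1), (m.choose j : ℝ) * x ^ (m - j) * (-(q * x)) ^ j / (R - j)
      = x ^ m * S := by
    rw [mul_sum]
    refine sum_congr rfl fun j hj => ?_
    rw [← neg_mul, mul_pow, ← pow_sub_mul_pow x (Nat.lt_succ_iff.1 (mem_range.1 hj))]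
    ring
  have hGL := tendsto_grunwaldLetnikov_pow (fun n => mod_cast hR n) m (mul_pos hq hx) x
  rw [hsum, mul_rpow hq.le hx.le] at hGL
  calc _ ↔ R / Gamma (1 - R) * (q ^ (-R) * x ^ (-R)) * (x ^ m * S) = _ :=
        ⟨tendsto_nhds_unique hGL, fun h => h ▸ hGL⟩
    _ ↔ _ := by
      rw [← Gamma_one_sub_div_mul_Gamma_add_one hR0, rpow_sub hx, rpow_natCast, rpow_neg hx.le]
      field_simp

/-- For non-integer R > 0, natural m, and q, x > 0, the coupled-limit Grünwald–Letnikov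
    expression for f(x) = x^m equals the Riemann–Liouville derivative
    Γ(m+1)/Γ(m-R+1) · x^{m-R} iff q satisfies the characteristic equation
    q^{-R} ∑_{j=0}^{m} C(m,j)(-q)^j/(R-j) = (π/sin(πR)) Γ(m+1)/(Γ(R+1)Γ(m-R+1)). -/
theorem coupled_GL_power_eq_RL_iff (R : ℝ) (hR : ∀ n : ℤ, R ≠ (n : ℝ)) (hR0 : 0 < R)
    (m : ℕ) (q x : ℝ) (hq : 0 < q) (hx : 0 < x) :
    Filter.Tendsto
      (fun N : ℕ =>
        (q * x / N) ^ (-R) *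
          ∑ k ∈ Finset.range (N + 1),
            (-1 : ℝ) ^ k * genBinom R k * (x - k * (q * x / N)) ^ m)
      Filter.atTop
      (nhds (Real.Gamma ((m : ℝ) + 1) / Real.Gamma ((m : ℝ) - R + 1) * x ^ ((m : ℝ) - R)))
      ↔ q ^ (-R) * ∑ j ∈ Finset.range (m + 1), (m.choose j : ℝ) * (-q) ^ j / (R - j)
          = Real.pi / Real.sin (Real.pi * R)
            * (Real.Gamma ((m : ℝ) + 1) / (Real.Gamma (R + 1) * Real.Gamma ((m : ℝ) - R + 1))) :=
  coupled_GL_power_eq_RL_iff_general R hR m q x hq hx
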